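/- Suppose v₀ : ℝ → ℝ and χ : ℝ → ℝ are continuous with C'χ(ξ) ≤ v₀(ξ) ≤ C''χ(ξ) for ξ < 0 (where C', C'' > 0 and χ > 0), and χ² is integrable near -∞. If |ψ(ξ)| ≤ C(1 + |ξ|^k) χ(ξ) and v₀' = χ with v₀(-∞)=0, then for every η ≤ 0, |∫_{-∞}^{η} χ(t) ψ(t) dt| ≤ C₁ (1 + |η|^k) χ(η)² for some constant C₁ independent of η. -/
import Mathlib


open Filter Topology MeasureTheory

/-- Integration by parts identity `∫_a^η (-t)^j (v₀²)' dt
  = (-η)^j v₀(η)² - (-a)^j v₀(a)² + j ∫_a^η (-t)^(j-1) v₀² dt`. -/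
lemma ibp_aux (v₀ χ : ℝ → ℝ) (hv₀ : Continuous v₀) (hχ : Continuous χ)
    (hder : ∀ ξ : ℝ, HasDerivAt v₀ (χ ξ) ξ) (j : ℕ) (a η : ℝ) :
    ∫ t in a..η, (-t) ^ j * (2 * v₀ t * χ t) =
      (-η) ^ j * v₀ η ^ 2 - (-a) ^ j * v₀ a ^ 2
        + (j : ℝ) * ∫ t in a..η, (-t) ^ (j - 1) * v₀ t ^ 2 := by
  have hF : ∀ t ∈ Set.uIcc a η,
      HasDerivAt (fun s => (-s) ^ j * v₀ s ^ 2)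
        (((j : ℝ) * (-t) ^ (j - 1) * (-1)) * v₀ t ^ 2 + (-t) ^ j * (2 * v₀ t ^ 1 * χ t)) t := by
    intro t _
    exact ((hasDerivAt_id t).neg.pow j).mul ((hder t).pow 2)
  have hint : IntervalIntegrable (fun t : ℝ =>
      ((j : ℝ) * (-t) ^ (j - 1) * (-1)) * v₀ t ^ 2 + (-t) ^ j * (2 * v₀ t ^ 1 * χ t))
      MeasureTheory.volume a η := by
    apply Continuous.intervalIntegrable
    fun_prop
  have key := intervalIntegral.integral_eq_sub_of_hasDerivAt hF hint
  have h1 : IntervalIntegrable (fun t : ℝ => ((j : ℝ) * (-t) ^ (j - 1) * (-1)) * v₀ t ^ 2)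
      MeasureTheory.volume a η := by
    apply Continuous.intervalIntegrable; fun_prop
  have h2 : IntervalIntegrable (fun t : ℝ => (-t) ^ j * (2 * v₀ t ^ 1 * χ t))
      MeasureTheory.volume a η := by
    apply Continuous.intervalIntegrable; fun_prop
  rw [intervalIntegral.integral_add h1 h2] at key
  have e1 : ∫ t in a..η, ((j : ℝ) * (-t) ^ (j - 1) * (-1)) * v₀ t ^ 2 =
      (-(j : ℝ)) * ∫ t in a..η, (-t) ^ (j - 1) * v₀ t ^ 2 := by
    rw [← intervalIntegral.integral_const_mul]
    apply intervalIntegral.integral_congr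
    intro t _
    ring
  have e2 : (∫ t in a..η, (-t) ^ j * (2 * v₀ t ^ 1 * χ t)) =
      ∫ t in a..η, (-t) ^ j * (2 * v₀ t * χ t) := by
    apply intervalIntegral.integral_congr
    intro t _
    ring
  rw [e1, e2] at key
  linarith [key]

/-- Key estimate (Lemma 2.2 of the paper):
`|∫_{-∞}^η χ ψ dt| ≤ C₁ (1 + |η|^k) χ(η)²` for `η ≤ 0`. -/
theorem stmt_9 (v₀ χ ψ : ℝ → ℝ) (C' C'' C : ℝ) (k : ℕ)
    (hC' : 0 < C') (hC'' : 0 < C'') (hC : 0 < C)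
    (hv₀ : Continuous v₀) (hχ : Continuous χ) (hψ : Continuous ψ)
    (hχpos : ∀ ξ : ℝ, 0 < χ ξ)
    (hsand : ∀ ξ : ℝ, ξ < 0 → C' * χ ξ ≤ v₀ ξ ∧ v₀ ξ ≤ C'' * χ ξ)
    (hχ2int : IntegrableOn (fun ξ => (χ ξ) ^ 2) (Set.Iic 0))
    (hψbd : ∀ ξ : ℝ, |ψ ξ| ≤ C * (1 + |ξ| ^ k) * χ ξ)
    (hder : ∀ ξ : ℝ, HasDerivAt v₀ (χ ξ) ξ)
    (hbot : Tendsto v₀ atBot (𝓝 0)) :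
    ∃ C₁ : ℝ, 0 < C₁ ∧ ∀ η : ℝ, η ≤ 0 →
      |∫ t in Set.Iic η, χ t * ψ t| ≤ C₁ * (1 + |η| ^ k) * (χ η) ^ 2 := by
  -- extend the sandwich inequality to ξ = 0 by continuity
  have hle : ∀ ξ : ℝ, ξ ≤ 0 → C' * χ ξ ≤ v₀ ξ ∧ v₀ ξ ≤ C'' * χ ξ := by
    intro ξ hξ
    rcases lt_or_eq_of_le hξ with h | h
    · exact hsand ξ h
    · subst h
      have h2 : Tendsto v₀ (𝓝[<] (0 : ℝ)) (𝓝 (v₀ 0)) :=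
        (hv₀.tendsto 0).mono_left nhdsWithin_le_nhds
      constructor
      · have h1 : Tendsto (fun x => C' * χ x) (𝓝[<] (0 : ℝ)) (𝓝 (C' * χ 0)) :=
          ((continuous_const.mul hχ).tendsto 0).mono_left nhdsWithin_le_nhds
        exact le_of_tendsto_of_tendsto h1 h2
          (Filter.eventually_of_mem self_mem_nhdsWithin fun x hx => (hsand x hx).1)
      · have h1 : Tendsto (fun x => C'' * χ x) (𝓝[<] (0 : ℝ)) (𝓝 (C'' * χ 0)) :=
          ((continuous_const.mul hχ).tendsto 0).mono_left nhdsWithin_le_nhds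
        exact le_of_tendsto_of_tendsto h2 h1
          (Filter.eventually_of_mem self_mem_nhdsWithin fun x hx => (hsand x hx).2)
  have hv₀pos : ∀ ξ : ℝ, ξ ≤ 0 → 0 < v₀ ξ := by
    intro ξ hξ
    have := (hle ξ hξ).1
    have := hχpos ξ
    nlinarith
  -- the fundamental estimate, on finite intervals
  have est : ∀ (j : ℕ) (η : ℝ), η ≤ 0 → ∀ a : ℝ, a ≤ η →
      2 * C' * ∫ t in a..η, (-t) ^ j * χ t ^ 2 ≤
        C'' ^ 2 * ((-η) ^ j * χ η ^ 2)
          + (j : ℝ) * (C'' ^ 2 * ∫ t in a..η, (-t) ^ (j - 1) * χ t ^ 2) := by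
    intro j η hη a ha
    have ibp := ibp_aux v₀ χ hv₀ hχ hder j a η
    have mono1 : ∫ t in a..η, 2 * C' * ((-t) ^ j * χ t ^ 2) ≤
        ∫ t in a..η, (-t) ^ j * (2 * v₀ t * χ t) := by
      apply intervalIntegral.integral_mono_on ha
        (Continuous.intervalIntegrable (by fun_prop) a η)
        (Continuous.intervalIntegrable (by fun_prop) a η)
      intro t ht
      have ht0 : t ≤ 0 := le_trans ht.2 hη
      have h := (hle t ht0).1
      have hp : (0 : ℝ) ≤ (-t) ^ j := pow_nonneg (by linarith) j
      have hχt := (hχpos t).le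
      nlinarith [mul_nonneg hp (mul_nonneg hχt (sub_nonneg.2 h))]
    have mono2 : ∫ t in a..η, (-t) ^ (j - 1) * v₀ t ^ 2 ≤
        ∫ t in a..η, C'' ^ 2 * ((-t) ^ (j - 1) * χ t ^ 2) := by
      apply intervalIntegral.integral_mono_on ha
        (Continuous.intervalIntegrable (by fun_prop) a η)
        (Continuous.intervalIntegrable (by fun_prop) a η)
      intro t ht
      have ht0 : t ≤ 0 := le_trans ht.2 hη
      have h1 := (hle t ht0).2
      have h0 := (hv₀pos t ht0).le
      have hp : (0 : ℝ) ≤ (-t) ^ (j - 1) := pow_nonneg (by linarith) _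
      have h2' : v₀ t ^ 2 ≤ C'' ^ 2 * χ t ^ 2 := by
        have := pow_le_pow_left₀ h0 h1 2
        rwa [mul_pow] at this
      nlinarith [mul_le_mul_of_nonneg_left h2' hp]
    rw [intervalIntegral.integral_const_mul] at mono1
    rw [intervalIntegral.integral_const_mul] at mono2
    have bound3 : (-η) ^ j * v₀ η ^ 2 ≤ C'' ^ 2 * ((-η) ^ j * χ η ^ 2) := by
      have h1 := (hle η hη).2
      have h0 := (hv₀pos η hη).le
      have hp : (0 : ℝ) ≤ (-η) ^ j := pow_nonneg (by linarith) _
      have h2' : v₀ η ^ 2 ≤ C'' ^ 2 * χ η ^ 2 := by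
        have := pow_le_pow_left₀ h0 h1 2
        rwa [mul_pow] at this
      nlinarith [mul_le_mul_of_nonneg_left h2' hp]
    have bound4 : 0 ≤ (-a) ^ j * v₀ a ^ 2 := by
      have hp : (0 : ℝ) ≤ (-a) ^ j := pow_nonneg (by linarith) _
      positivity
    have jnn : (0 : ℝ) ≤ (j : ℝ) := Nat.cast_nonneg j
    have hj := mul_le_mul_of_nonneg_left mono2 jnn
    linarith [ibp, mono1, hj, bound3, bound4]
  -- main induction
  have main : ∀ j : ℕ, ∃ A : ℝ, 0 < A ∧ ∀ η : ℝ, η ≤ 0 →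
      IntegrableOn (fun t => (-t) ^ j * χ t ^ 2) (Set.Iic η) ∧
      (∫ t in Set.Iic η, (-t) ^ j * χ t ^ 2) ≤ A * ((1 + (-η) ^ j) * χ η ^ 2) := by
    intro j
    induction j with
    | zero =>
      refine ⟨C'' ^ 2 / (2 * C'), by positivity, ?_⟩
      intro η hη
      have hInt : IntegrableOn (fun t => (-t : ℝ) ^ 0 * χ t ^ 2) (Set.Iic η) := by
        have := hχ2int.mono_set (Set.Iic_subset_Iic.2 hη)
        simpa using this
      refine ⟨hInt, ?_⟩
      have tnd := MeasureTheory.intervalIntegral_tendsto_integral_Iic η hInt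
        (tendsto_id (α := ℝ))
      have hbd : ∀ᶠ a in (atBot : Filter ℝ),
          (∫ t in a..η, (-t : ℝ) ^ 0 * χ t ^ 2) ≤
            C'' ^ 2 / (2 * C') * ((1 + (-η) ^ 0) * χ η ^ 2) := by
        filter_upwards [eventually_le_atBot η] with a ha
        have h := est 0 η hη a ha
        simp only [Nat.cast_zero, zero_mul, add_zero, pow_zero, one_mul] at h ⊢
        rw [div_mul_eq_mul_div, le_div_iff₀ (by linarith : (0 : ℝ) < 2 * C')]
        nlinarith [sq_nonneg (χ η)]
      exact le_of_tendsto tnd hbd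
    | succ j ih =>
      obtain ⟨A, hA, hAp⟩ := ih
      refine ⟨C'' ^ 2 / (2 * C') * (1 + 2 * ((j : ℝ) + 1) * A), by positivity, ?_⟩
      intro η hη
      obtain ⟨hIntj, hBdj⟩ := hAp η hη
      have hη' : -η ≥ 0 := by linarith
      -- interval integrals of the level-j weight are bounded by the Iic integral
      have hK : ∀ a : ℝ, a ≤ η →
          (∫ t in a..η, (-t) ^ j * χ t ^ 2) ≤ A * ((1 + (-η) ^ j) * χ η ^ 2) := by
        intro a ha
        have h1 : (∫ t in a..η, (-t) ^ j * χ t ^ 2) =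
            ∫ t in Set.Ioc a η, (-t) ^ j * χ t ^ 2 := intervalIntegral.integral_of_le ha
        have hnn : 0 ≤ᵐ[MeasureTheory.volume.restrict (Set.Iic η)]
            fun t => (-t) ^ j * χ t ^ 2 := by
          filter_upwards [ae_restrict_mem measurableSet_Iic] with t ht
          have ht0 : t ≤ 0 := le_trans ht hη
          exact mul_nonneg (pow_nonneg (by linarith) j) (sq_nonneg _)
        have h2 := MeasureTheory.setIntegral_mono_set hIntj hnn
          ((Set.Ioc_subset_Iic_self : Set.Ioc a η ⊆ Set.Iic η).eventuallyLE)
        rw [h1]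
        exact le_trans h2 hBdj
      -- uniform bound on the interval integrals of the level-(j+1) weight
      have uniform : ∀ a : ℝ, a ≤ η →
          2 * C' * (∫ t in a..η, (-t) ^ (j + 1) * χ t ^ 2) ≤
            C'' ^ 2 * ((-η) ^ (j + 1) * χ η ^ 2)
              + ((j : ℝ) + 1) * (C'' ^ 2 * (A * ((1 + (-η) ^ j) * χ η ^ 2))) := by
        intro a ha
        have h := est (j + 1) η hη a ha
        simp only [Nat.add_sub_cancel] at h
        push_cast at h
        have h2 := mul_le_mul_of_nonneg_left (hK a ha)
          (by positivity : (0 : ℝ) ≤ ((j : ℝ) + 1) * C'' ^ 2)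
        nlinarith [h, h2]
      have hfi : ∀ a : ℝ, IntegrableOn (fun t => (-t) ^ (j + 1) * χ t ^ 2)
          (Set.Ioc a η) := by
        intro a
        exact (Continuous.integrableOn_Ioc (by fun_prop))
      set B : ℝ := (C'' ^ 2 * ((-η) ^ (j + 1) * χ η ^ 2)
          + ((j : ℝ) + 1) * (C'' ^ 2 * (A * ((1 + (-η) ^ j) * χ η ^ 2)))) / (2 * C') with hB
      have uniform' : ∀ a : ℝ, a ≤ η →
          (∫ t in a..η, (-t) ^ (j + 1) * χ t ^ 2) ≤ B := by
        intro a ha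
        rw [hB, le_div_iff₀ (by linarith : (0 : ℝ) < 2 * C')]
        nlinarith [uniform a ha]
      have hInt : IntegrableOn (fun t => (-t) ^ (j + 1) * χ t ^ 2) (Set.Iic η) := by
        apply MeasureTheory.integrableOn_Iic_of_intervalIntegral_norm_bounded B η hfi
          (tendsto_id (α := ℝ))
        filter_upwards [eventually_le_atBot η] with a ha
        have heq : (∫ t in a..η, ‖(-t) ^ (j + 1) * χ t ^ 2‖) =
            ∫ t in a..η, (-t) ^ (j + 1) * χ t ^ 2 := by
          apply intervalIntegral.integral_congr
          intro t ht
          rw [Set.uIcc_of_le ha] at ht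
          have ht0 : t ≤ 0 := le_trans ht.2 hη
          have : (0 : ℝ) ≤ (-t) ^ (j + 1) * χ t ^ 2 :=
            mul_nonneg (pow_nonneg (by linarith) _) (sq_nonneg _)
          beta_reduce
          rw [Real.norm_eq_abs, abs_of_nonneg this]
        rw [heq]
        exact uniform' a ha
      refine ⟨hInt, ?_⟩
      have tnd := MeasureTheory.intervalIntegral_tendsto_integral_Iic η hInt
        (tendsto_id (α := ℝ))
      have hIicB : (∫ t in Set.Iic η, (-t) ^ (j + 1) * χ t ^ 2) ≤ B :=
        le_of_tendsto tnd (by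
          filter_upwards [eventually_le_atBot η] with a ha
          exact uniform' a ha)
      -- finally compare B with the claimed bound
      have hQ : (-η) ^ j ≤ 1 + (-η) ^ (j + 1) := by
        rcases le_total (-η) 1 with h | h
        · have : (-η) ^ j ≤ 1 := pow_le_one₀ hη' h
          have : (0 : ℝ) ≤ (-η) ^ (j + 1) := pow_nonneg hη' _
          linarith
        · have h1 : (-η) ^ j ≤ (-η) ^ (j + 1) := by
            rw [pow_succ]
            exact le_mul_of_one_le_right (pow_nonneg hη' _) h
          have : (0 : ℝ) ≤ (-η) ^ (j + 1) := pow_nonneg hη' _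
          linarith
      have hfinal : B ≤ C'' ^ 2 / (2 * C') * (1 + 2 * ((j : ℝ) + 1) * A)
          * ((1 + (-η) ^ (j + 1)) * χ η ^ 2) := by
        rw [hB, div_le_iff₀ (by linarith : (0 : ℝ) < 2 * C')]
        have hc : (0 : ℝ) ≤ χ η ^ 2 := sq_nonneg _
        have hP : (0 : ℝ) ≤ (-η) ^ (j + 1) := pow_nonneg hη' _
        have t1 : (0 : ℝ) ≤ ((j : ℝ) + 1) * A := by positivity
        have t2 : (0 : ℝ) ≤ C'' ^ 2 * χ η ^ 2 := by positivity
        have t3 : (0 : ℝ) ≤ 2 * (1 + (-η) ^ (j + 1)) - (1 + (-η) ^ j) := by linarith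
        have key : C'' ^ 2 * ((-η) ^ (j + 1) * χ η ^ 2)
            + ((j : ℝ) + 1) * (C'' ^ 2 * (A * ((1 + (-η) ^ j) * χ η ^ 2)))
            ≤ C'' ^ 2 * (1 + 2 * ((j : ℝ) + 1) * A) * ((1 + (-η) ^ (j + 1)) * χ η ^ 2) := by
          nlinarith [mul_nonneg (mul_nonneg t1 t2) t3, t2]
        calc C'' ^ 2 * ((-η) ^ (j + 1) * χ η ^ 2)
            + ((j : ℝ) + 1) * (C'' ^ 2 * (A * ((1 + (-η) ^ j) * χ η ^ 2)))
            ≤ C'' ^ 2 * (1 + 2 * ((j : ℝ) + 1) * A) * ((1 + (-η) ^ (j + 1)) * χ η ^ 2) := key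
          _ = C'' ^ 2 / (2 * C') * (1 + 2 * ((j : ℝ) + 1) * A)
              * ((1 + (-η) ^ (j + 1)) * χ η ^ 2) * (2 * C') := by
            field_simp
      exact le_trans hIicB hfinal
  -- assemble the final estimate
  obtain ⟨A0, hA0, h0⟩ := main 0
  obtain ⟨Ak, hAk, hk⟩ := main k
  refine ⟨C * (2 * A0 + Ak), by positivity, ?_⟩
  intro η hη
  obtain ⟨hI0, hB0⟩ := h0 η hη
  obtain ⟨hIk, hBk⟩ := hk η hη
  have hg : IntegrableOn
      (fun t => C * ((-t) ^ 0 * χ t ^ 2) + C * ((-t) ^ k * χ t ^ 2)) (Set.Iic η) :=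
    (hI0.const_mul C).add (hIk.const_mul C)
  have hdom : ∀ t ∈ Set.Iic η, |χ t * ψ t| ≤
      C * ((-t) ^ 0 * χ t ^ 2) + C * ((-t) ^ k * χ t ^ 2) := by
    intro t ht
    have ht0 : t ≤ 0 := le_trans ht hη
    have h1 := hψbd t
    rw [abs_of_nonpos ht0] at h1
    have hχt := hχpos t
    calc |χ t * ψ t| = χ t * |ψ t| := by rw [abs_mul, abs_of_pos hχt]
      _ ≤ χ t * (C * (1 + (-t) ^ k) * χ t) := mul_le_mul_of_nonneg_left h1 hχt.le
      _ = C * ((-t) ^ 0 * χ t ^ 2) + C * ((-t) ^ k * χ t ^ 2) := by ring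
  have hint : IntegrableOn (fun t => χ t * ψ t) (Set.Iic η) := by
    apply MeasureTheory.Integrable.mono hg ((hχ.mul hψ).aestronglyMeasurable)
    filter_upwards [ae_restrict_mem measurableSet_Iic] with t ht
    rw [Real.norm_eq_abs, Real.norm_eq_abs]
    exact (hdom t ht).trans (le_abs_self _)
  have habs : |∫ t in Set.Iic η, χ t * ψ t| ≤ ∫ t in Set.Iic η, |χ t * ψ t| := by
    have := MeasureTheory.norm_integral_le_integral_norm
      (μ := MeasureTheory.volume.restrict (Set.Iic η)) (fun t => χ t * ψ t)
    simpa only [Real.norm_eq_abs] using this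
  have h3 : (∫ t in Set.Iic η, |χ t * ψ t|) ≤
      ∫ t in Set.Iic η, (C * ((-t) ^ 0 * χ t ^ 2) + C * ((-t) ^ k * χ t ^ 2)) := by
    apply MeasureTheory.integral_mono_ae hint.abs hg
    filter_upwards [ae_restrict_mem measurableSet_Iic] with t ht
    exact hdom t ht
  have h4 : (∫ t in Set.Iic η, (C * ((-t) ^ 0 * χ t ^ 2) + C * ((-t) ^ k * χ t ^ 2)))
      = C * (∫ t in Set.Iic η, (-t) ^ 0 * χ t ^ 2)
        + C * ∫ t in Set.Iic η, (-t) ^ k * χ t ^ 2 := by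
    rw [MeasureTheory.integral_add (hI0.const_mul C) (hIk.const_mul C),
      MeasureTheory.integral_const_mul, MeasureTheory.integral_const_mul]
  have t1 := mul_le_mul_of_nonneg_left hB0 hC.le
  have t2 := mul_le_mul_of_nonneg_left hBk hC.le
  have hP : (0 : ℝ) ≤ (-η) ^ k := pow_nonneg (by linarith) k
  have hc : (0 : ℝ) ≤ χ η ^ 2 := sq_nonneg _
  have t3 : (0 : ℝ) ≤ C * A0 * ((-η) ^ k * χ η ^ 2) := by positivity
  rw [abs_of_nonpos hη]
  simp only [pow_zero, one_mul] at t1 h3 h4 ⊢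
  nlinarith [habs, h3, h4, t1, t2, t3]
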